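/- arXiv:1103.0995 — 4 statements merged into one kernel-verified Lean document; each statement's English description precedes it below -/
import Mathlib

section
/- Let A ∈ R^{m×n}, let C ∈ R^{m×r}, let k be an integer with k < r, and let Q ∈ R^{m×r'} be a matrix with orthonormal columns spanning the column space of C. Let (QᵀA)_k denote a best rank-k approximation to QᵀA in the Frobenius norm. Then (i) ‖A − Q(QᵀA)_k‖_F² = ‖A − Π^F_{C,k}(A)‖_F², and (ii) ‖A − Q(QᵀA)_k‖₂² ≤ 2‖A − Π²_{C,k}(A)‖₂². -/
open Matrix MeasureTheory

noncomputable def frobSq {m n : Type*} [Fintype m] [Fintype n] (A : Matrix m n ℝ) : ℝ :=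
  ∑ i, ∑ j, A i j ^ 2

noncomputable def spec {m n : Type*} [Fintype m] [Fintype n] [DecidableEq n]
    (A : Matrix m n ℝ) : ℝ :=
  ‖LinearMap.toContinuousLinearMap (Matrix.toEuclideanLin A)‖

noncomputable def specErr {m n : Type*} [Fintype m] [Fintype n] [DecidableEq n]
    (A : Matrix m n ℝ) (k : ℕ) : ℝ :=
  sInf {e : ℝ | ∃ X : Matrix m n ℝ, X.rank ≤ k ∧ e = spec (A - X)}

noncomputable def frobSqErr {m n : Type*} [Fintype m] [Fintype n]
    (A : Matrix m n ℝ) (k : ℕ) : ℝ :=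
  sInf {e : ℝ | ∃ X : Matrix m n ℝ, X.rank ≤ k ∧ e = frobSq (A - X)}

noncomputable def specErrIn {m n r : Type*} [Fintype m] [Fintype n] [DecidableEq n]
    [Fintype r] (A : Matrix m n ℝ) (C : Matrix m r ℝ) (k : ℕ) : ℝ :=
  sInf {e : ℝ | ∃ X : Matrix m n ℝ, X.rank ≤ k ∧
    LinearMap.range X.mulVecLin ≤ LinearMap.range C.mulVecLin ∧ e = spec (A - X)}

noncomputable def frobSqErrIn {m n r : Type*} [Fintype m] [Fintype n] [Fintype r]
    (A : Matrix m n ℝ) (C : Matrix m r ℝ) (k : ℕ) : ℝ :=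
  sInf {e : ℝ | ∃ X : Matrix m n ℝ, X.rank ≤ k ∧
    LinearMap.range X.mulVecLin ≤ LinearMap.range C.mulVecLin ∧ e = frobSq (A - X)}

def IsMoorePenrose {m n : Type*} [Fintype m] [Fintype n]
    (M : Matrix m n ℝ) (P : Matrix n m ℝ) : Prop :=
  M * P * M = M ∧ P * M * P = P ∧ (M * P)ᵀ = M * P ∧ (P * M)ᵀ = P * M

/-!
Put `G = A - Q Qᵀ A`. For every `D`, `A - Q D = G + Q (QᵀA - D)` with `Qᵀ G = 0`, hence
`(A - Q D)ᵀ (A - Q D) = Gᵀ G + (QᵀA - D)ᵀ (QᵀA - D)`: the squared Frobenius error splits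
exactly, and the squared spectral error is at most the sum of the two squared spectral errors.
A competitor `X` in the column space of `C` satisfies `X = Q (QᵀX)`, so (i) is the Frobenius
optimality of `M`. For (ii), `‖G‖₂ ≤ ‖A - X‖₂` because `G = (I - Q Qᵀ)(A - X)`, and
`‖QᵀA - M‖₂ ≤ ‖QᵀA - QᵀX‖₂ ≤ ‖A - X‖₂` because a Frobenius-optimal rank-`k` approximation is
also spectrally optimal.

That last fact is proved without the SVD. The columns of `M` are the projections of those of
`B` onto the column space `U` of `M`. If some `u ⊥ U` had `‖Bᵀu‖ > ‖B - N‖ ‖u‖`, adjoin `u`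
to `U` and then remove a direction `y` orthogonal to the range of `N`, where
`‖Bᵀy‖ ≤ ‖B - N‖ ‖y‖`; the result is a subspace of dimension at most `k` onto which the columns
of `B` project with a smaller residual than onto `U`.
-/

open Module
open scoped RealInnerProductSpace Matrix.Norms.L2Operator

theorem sq_le_mul_csInf_sq {S : Set ℝ} {T c : ℝ} (hS : S.Nonempty) (hT : 0 ≤ T) (hc : 0 < c)
    (h : ∀ e ∈ S, 0 ≤ e ∧ T ^ 2 ≤ c * e ^ 2) : T ^ 2 ≤ c * sInf S ^ 2 := by
  have hsqrt : 0 < √c := Real.sqrt_pos.2 hc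
  have hinf : T / √c ≤ sInf S := le_csInf hS fun e he ↦ by
    rw [div_le_iff₀ hsqrt]
    refine le_of_sq_le_sq ?_ (mul_nonneg (h e he).1 hsqrt.le)
    rw [mul_pow, Real.sq_sqrt hc.le, mul_comm]
    exact (h e he).2
  have := pow_le_pow_left₀ (div_nonneg hT hsqrt.le) hinf 2
  rwa [div_pow, Real.sq_sqrt hc.le, div_le_iff₀ hc, mul_comm] at this

namespace Submodule

variable {𝕜 E : Type*} [RCLike 𝕜] [NormedAddCommGroup E] [InnerProductSpace 𝕜 E]

theorem norm_sub_sq_eq_norm_sub_starProjection_sq_add (V : Submodule 𝕜 E)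
    [V.HasOrthogonalProjection] {x y : E} (hy : y ∈ V) :
    ‖x - y‖ ^ 2 = ‖x - V.starProjection x‖ ^ 2 + ‖V.starProjection x - y‖ ^ 2 := by
  rw [← sub_add_sub_cancel x (V.starProjection x) y, sq, sq, sq]
  exact norm_add_sq_eq_norm_sq_add_norm_sq_of_inner_eq_zero _ _
    (V.starProjection_inner_eq_zero x _ (V.sub_mem (V.starProjection_apply_mem x) hy))

variable {U V : Submodule 𝕜 E} [U.HasOrthogonalProjection] [V.HasOrthogonalProjection]
  [(U ⊔ V).HasOrthogonalProjection]

theorem IsOrtho.starProjection_sup (h : U ⟂ V) (x : E) :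
    (U ⊔ V).starProjection x = U.starProjection x + V.starProjection x := by
  refine eq_starProjection_of_mem_orthogonal
    (add_mem_sup (U.starProjection_apply_mem x) (V.starProjection_apply_mem x)) ?_
  rw [← inf_orthogonal]
  refine mem_inf.2 ⟨?_, ?_⟩
  · simpa only [sub_sub] using
      sub_mem (U.sub_starProjection_mem_orthogonal x) (h.ge (V.starProjection_apply_mem x))
  · simpa only [sub_sub, add_comm (U.starProjection x)] using
      sub_mem (V.sub_starProjection_mem_orthogonal x) (h.le (U.starProjection_apply_mem x))

theorem IsOrtho.norm_sub_starProjection_sup_sq_add (h : U ⟂ V) (x : E) :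
    ‖x - (U ⊔ V).starProjection x‖ ^ 2 + ‖V.starProjection x‖ ^ 2 =
      ‖x - U.starProjection x‖ ^ 2 := by
  have hV : V.starProjection x ∈ U ⊔ V := mem_sup_right (V.starProjection_apply_mem x)
  rw [sq, sq, sq, ← norm_add_sq_eq_norm_sq_add_norm_sq_of_inner_eq_zero _ _
    ((U ⊔ V).starProjection_inner_eq_zero x _ hV), h.starProjection_sup, sub_add_eq_sub_sub,
    sub_add_cancel]

end Submodule

theorem norm_starProjection_span_singleton_sq {E : Type*} [NormedAddCommGroup E]
    [InnerProductSpace ℝ E] (v x : E) :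
    ‖(ℝ ∙ v).starProjection x‖ ^ 2 = ⟪v, x⟫ ^ 2 / ‖v‖ ^ 2 := by
  rw [Submodule.starProjection_singleton, norm_smul, mul_pow, Real.norm_eq_abs, sq_abs,
    RCLike.ofReal_real_eq_id, id]
  rcases eq_or_ne v 0 with rfl | hv
  · simp
  · field_simp

section Residual

variable {ι E : Type*} [Fintype ι] [NormedAddCommGroup E] [InnerProductSpace ℝ E]
  [FiniteDimensional ℝ E]

noncomputable def projResidual (b : ι → E) (V : Submodule ℝ E) : ℝ :=
  ∑ j, ‖b j - V.starProjection (b j)‖ ^ 2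

theorem projResidual_sup_span_singleton_add (b : ι → E) {V : Submodule ℝ E} {x : E}
    (hx : x ∈ Vᗮ) :
    projResidual b (V ⊔ ℝ ∙ x) + (∑ j, ⟪x, b j⟫ ^ 2) / ‖x‖ ^ 2 = projResidual b V := by
  have h : V ⟂ (ℝ ∙ x) :=
    Submodule.isOrtho_comm.1 ((Submodule.span_singleton_le_iff_mem _ _).2 hx)
  simp only [projResidual, Finset.sum_div, ← Finset.sum_add_distrib,
    ← norm_starProjection_span_singleton_sq]
  exact Finset.sum_congr rfl fun j _ ↦ h.norm_sub_starProjection_sup_sq_add (b j)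

theorem exists_mem_inf_finrank_orthogonal_inf_le {W K : Submodule ℝ E} {k : ℕ}
    (hW : finrank ℝ W ≤ k + 1) (hK : finrank ℝ E ≤ finrank ℝ K + k) :
    ∃ y ∈ W ⊓ K, finrank ℝ ↥((ℝ ∙ y)ᗮ ⊓ W) ≤ k := by
  by_cases hWk : finrank ℝ W ≤ k
  · refine ⟨0, zero_mem _, ?_⟩
    rwa [Submodule.span_zero_singleton, Submodule.bot_orthogonal_eq_top, top_inf_eq]
  have hWK : 0 < finrank ℝ ↥(W ⊓ K) := by
    have := Submodule.finrank_sup_add_finrank_inf_eq W K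
    have := (W ⊔ K).finrank_le
    omega
  obtain ⟨⟨y, hy⟩, hy0⟩ := Module.finrank_pos_iff_exists_ne_zero.1 hWK
  refine ⟨y, hy, Nat.le_of_lt_succ (lt_of_lt_of_le ?_ hW)⟩
  refine Submodule.finrank_lt_finrank_of_lt (lt_of_le_of_ne inf_le_right fun h ↦ ?_)
  have hyy := Submodule.mem_orthogonal_singleton_iff_inner_left.1 (h.ge hy.1).1
  exact hy0 (Subtype.ext (inner_self_eq_zero.1 hyy))

theorem sum_inner_sq_le_of_isMinOn_projResidual {b : ι → E} {k : ℕ} {U K : Submodule ℝ E}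
    (hUk : finrank ℝ U ≤ k) (hU : IsMinOn (projResidual b) {V | finrank ℝ V ≤ k} U)
    (hK : finrank ℝ E ≤ finrank ℝ K + k) {c : ℝ} (hc : 0 ≤ c)
    (hKc : ∀ y ∈ K, ∑ j, ⟪y, b j⟫ ^ 2 ≤ c * ‖y‖ ^ 2) {u : E} (hu : u ∈ Uᗮ) :
    ∑ j, ⟪u, b j⟫ ^ 2 ≤ c * ‖u‖ ^ 2 := by
  rcases eq_or_ne u 0 with rfl | hu0
  · simp
  have hWk : finrank ℝ ↥(U ⊔ ℝ ∙ u) ≤ k + 1 := by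
    have := Submodule.finrank_add_le_finrank_add_finrank U (ℝ ∙ u)
    rw [finrank_span_singleton hu0] at this
    omega
  obtain ⟨y, ⟨hyW, hyK⟩, hyk⟩ := exists_mem_inf_finrank_orthogonal_inf_le hWk hK
  have hy : y ∈ ((ℝ ∙ y)ᗮ ⊓ (U ⊔ ℝ ∙ u))ᗮ := Submodule.orthogonal_le inf_le_left
    (Submodule.le_orthogonal_orthogonal _ (Submodule.mem_span_singleton_self y))
  have hV := projResidual_sup_span_singleton_add b hy
  rw [sup_comm, Submodule.sup_orthogonal_inf_of_hasOrthogonalProjection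
    ((Submodule.span_singleton_le_iff_mem _ _).2 hyW)] at hV
  have hUV : projResidual b U ≤ projResidual b ((ℝ ∙ y)ᗮ ⊓ (U ⊔ ℝ ∙ u)) := hU hyk
  have hW := projResidual_sup_span_singleton_add b hu
  rw [← div_le_iff₀ (by positivity)]
  calc (∑ j, ⟪u, b j⟫ ^ 2) / ‖u‖ ^ 2
      ≤ (∑ j, ⟪y, b j⟫ ^ 2) / ‖y‖ ^ 2 := by linarith
    _ ≤ c := div_le_of_le_mul₀ (by positivity) hc (hKc y hyK)

end Residual

namespace Matrix

variable {m n r : Type*}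

def colVec (X : Matrix m n ℝ) (j : n) : EuclideanSpace ℝ m := WithLp.toLp 2 (Xᵀ j)

theorem colVec_sub (X Y : Matrix m n ℝ) (j : n) : colVec (X - Y) j = colVec X j - colVec Y j :=
  rfl

theorem frobSq_nonneg [Fintype m] [Fintype n] (X : Matrix m n ℝ) : 0 ≤ frobSq X := by
  unfold frobSq; positivity

theorem frobSq_eq_zero_iff [Fintype m] [Fintype n] {X : Matrix m n ℝ} :
    frobSq X = 0 ↔ X = 0 := by
  simp [frobSq, Finset.sum_eq_zero_iff_of_nonneg, sq_nonneg, Finset.sum_nonneg, ← Matrix.ext_iff]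

theorem frobSq_eq_sum_norm_colVec_sq [Fintype m] [Fintype n] (X : Matrix m n ℝ) :
    frobSq X = ∑ j, ‖colVec X j‖ ^ 2 := by
  rw [frobSq, Finset.sum_comm]
  simp [colVec, EuclideanSpace.norm_sq_eq]

theorem frobSq_eq_trace [Fintype m] [Fintype n] (X : Matrix m n ℝ) :
    frobSq X = trace (Xᵀ * X) := by
  rw [frobSq, Finset.sum_comm]
  simp [trace, mul_apply, sq]

theorem colVec_mem_range_toEuclideanLin [Fintype n] [DecidableEq n] (X : Matrix m n ℝ)
    (j : n) : colVec X j ∈ LinearMap.range (toEuclideanLin X) :=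
  ⟨WithLp.toLp 2 (Pi.single j 1), by ext i; simp [colVec, mulVec_single]⟩

theorem range_toEuclideanLin_le [Fintype n] [DecidableEq n] {X : Matrix m n ℝ}
    {V : Submodule ℝ (EuclideanSpace ℝ m)} (h : ∀ j, colVec X j ∈ V) :
    LinearMap.range (toEuclideanLin X) ≤ V := by
  rintro _ ⟨v, rfl⟩
  have hv : toEuclideanLin X v = ∑ j, v j • colVec X j := by
    ext i; simp [colVec, mulVec, dotProduct, Finset.sum_apply, mul_comm]
  rw [hv]
  exact V.sum_mem fun j _ ↦ V.smul_mem _ (h j)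

theorem finrank_range_toEuclideanLin [Fintype m] [Fintype n] [DecidableEq n]
    (X : Matrix m n ℝ) :
    Module.finrank ℝ (LinearMap.range (toEuclideanLin (𝕜 := ℝ) X)) = X.rank := by
  rw [toEuclideanLin_eq_toLin_orthonormal]
  exact (rank_eq_finrank_range_toLin X _ _).symm

theorem sum_inner_colVec_sq [Fintype m] [Fintype n] [DecidableEq m] (X : Matrix m n ℝ)
    (x : EuclideanSpace ℝ m) :
    ∑ j, ⟪x, colVec X j⟫ ^ 2 = ‖toEuclideanLin Xᵀ x‖ ^ 2 := by
  simp [EuclideanSpace.norm_sq_eq, PiLp.inner_apply, colVec, mulVec, dotProduct]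

theorem sum_inner_colVec_sq_le [Fintype m] [Fintype n] [DecidableEq m] [DecidableEq n]
    (X : Matrix m n ℝ) (x : EuclideanSpace ℝ m) :
    ∑ j, ⟪x, colVec X j⟫ ^ 2 ≤ ‖X‖ ^ 2 * ‖x‖ ^ 2 := by
  rw [sum_inner_colVec_sq, ← mul_pow, ← l2_opNorm_conjTranspose,
    conjTranspose_eq_transpose_of_trivial]
  gcongr
  exact (toEuclideanLin.trans LinearMap.toContinuousLinearMap Xᵀ).le_opNorm x

theorem l2_opNorm_le_of_sum_inner_colVec_sq_le [Fintype m] [Fintype n] [DecidableEq m]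
    [DecidableEq n] {X : Matrix m n ℝ} {c : ℝ} (hc : 0 ≤ c)
    (h : ∀ x, ∑ j, ⟪x, colVec X j⟫ ^ 2 ≤ c ^ 2 * ‖x‖ ^ 2) : ‖X‖ ≤ c := by
  rw [← l2_opNorm_conjTranspose, conjTranspose_eq_transpose_of_trivial]
  refine ContinuousLinearMap.opNorm_le_bound _ hc fun x ↦ ?_
  have hx := h x
  rw [sum_inner_colVec_sq, ← mul_pow] at hx
  exact le_of_sq_le_sq hx (by positivity)

noncomputable def projCols [Fintype m] (V : Submodule ℝ (EuclideanSpace ℝ m))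
    (B : Matrix m n ℝ) : Matrix m n ℝ :=
  of fun i j ↦ V.starProjection (colVec B j) i

theorem colVec_projCols [Fintype m] (V : Submodule ℝ (EuclideanSpace ℝ m)) (B : Matrix m n ℝ)
    (j : n) : colVec (projCols V B) j = V.starProjection (colVec B j) :=
  rfl

theorem rank_projCols_le [Fintype m] [Fintype n] [DecidableEq n]
    (V : Submodule ℝ (EuclideanSpace ℝ m)) (B : Matrix m n ℝ) :
    (projCols V B).rank ≤ finrank ℝ V := by
  rw [← finrank_range_toEuclideanLin]
  exact Submodule.finrank_mono (range_toEuclideanLin_le fun j ↦ V.starProjection_apply_mem _)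

theorem frobSq_sub_projCols [Fintype m] [Fintype n] (V : Submodule ℝ (EuclideanSpace ℝ m))
    (B : Matrix m n ℝ) : frobSq (B - projCols V B) = projResidual (colVec B) V := by
  simp only [frobSq_eq_sum_norm_colVec_sq, colVec_sub, colVec_projCols, projResidual]

theorem frobSq_sub_eq_projResidual_add [Fintype m] [Fintype n] [DecidableEq n]
    (B X : Matrix m n ℝ) :
    frobSq (B - X) = projResidual (colVec B) (LinearMap.range (toEuclideanLin X)) +
      frobSq (projCols (LinearMap.range (toEuclideanLin X)) B - X) := by
  simp only [frobSq_eq_sum_norm_colVec_sq, colVec_sub, colVec_projCols, projResidual,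
    ← Finset.sum_add_distrib]
  exact Finset.sum_congr rfl fun j _ ↦
    Submodule.norm_sub_sq_eq_norm_sub_starProjection_sq_add _ (colVec_mem_range_toEuclideanLin X j)

theorem eq_projCols_of_isMinOn_frobSq [Fintype m] [Fintype n] [DecidableEq n] {k : ℕ}
    {B M : Matrix m n ℝ} (hM : M.rank ≤ k)
    (hMmin : IsMinOn (fun X ↦ frobSq (B - X)) {X | X.rank ≤ k} M) :
    M = projCols (LinearMap.range (toEuclideanLin M)) B := by
  set U := LinearMap.range (toEuclideanLin (𝕜 := ℝ) M)
  have hres : frobSq (B - M) ≤ projResidual (colVec B) U :=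
    (hMmin ((rank_projCols_le U B).trans ((finrank_range_toEuclideanLin M).trans_le hM))).trans_eq
      (frobSq_sub_projCols U B)
  have hdec := frobSq_sub_eq_projResidual_add B M
  have hzero : frobSq (projCols U B - M) = 0 := le_antisymm (by linarith) (frobSq_nonneg _)
  exact (sub_eq_zero.1 (frobSq_eq_zero_iff.1 hzero)).symm

theorem l2_opNorm_sub_le_of_isMinOn_frobSq [Fintype m] [Fintype n] [DecidableEq m]
    [DecidableEq n] {k : ℕ} {B M N : Matrix m n ℝ} (hM : M.rank ≤ k)
    (hMmin : IsMinOn (fun X ↦ frobSq (B - X)) {X | X.rank ≤ k} M) (hN : N.rank ≤ k) :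
    ‖B - M‖ ≤ ‖B - N‖ := by
  set U := LinearMap.range (toEuclideanLin (𝕜 := ℝ) M)
  have hUk : finrank ℝ U ≤ k := (finrank_range_toEuclideanLin M).trans_le hM
  have hMU : M = projCols U B := eq_projCols_of_isMinOn_frobSq hM hMmin
  have hUmin : IsMinOn (projResidual (colVec B)) {V | finrank ℝ V ≤ k} U := fun V hV ↦
    calc projResidual (colVec B) U = frobSq (B - M) := by
          rw [← frobSq_sub_projCols, ← hMU]
      _ ≤ frobSq (B - projCols V B) := hMmin ((rank_projCols_le V B).trans hV)
      _ = projResidual (colVec B) V := frobSq_sub_projCols V B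
  set K := (LinearMap.range (toEuclideanLin (𝕜 := ℝ) N))ᗮ with hKdef
  have hK : finrank ℝ (EuclideanSpace ℝ m) ≤ finrank ℝ K + k := by
    have := Submodule.finrank_add_finrank_orthogonal (LinearMap.range (toEuclideanLin (𝕜 := ℝ) N))
    rw [finrank_range_toEuclideanLin, ← hKdef] at this
    omega
  have hKc : ∀ y ∈ K, ∑ j, ⟪y, colVec B j⟫ ^ 2 ≤ ‖B - N‖ ^ 2 * ‖y‖ ^ 2 := by
    intro y hy
    have hNy : ∀ j, ⟪y, colVec N j⟫ = 0 := fun j ↦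
      Submodule.inner_left_of_mem_orthogonal (colVec_mem_range_toEuclideanLin N j) hy
    simpa [colVec_sub, inner_sub_right, hNy] using sum_inner_colVec_sq_le (B - N) y
  refine l2_opNorm_le_of_sum_inner_colVec_sq_le (norm_nonneg _) fun x ↦ ?_
  set u := Uᗮ.starProjection x
  have hu : ∀ j, ⟪x, colVec (B - M) j⟫ = ⟪u, colVec B j⟫ := fun j ↦ by
    rw [hMU, colVec_sub, colVec_projCols, ← Submodule.starProjection_orthogonal_val,
      Submodule.inner_starProjection_left_eq_right]
  calc ∑ j, ⟪x, colVec (B - M) j⟫ ^ 2 = ∑ j, ⟪u, colVec B j⟫ ^ 2 := by simp only [hu]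
    _ ≤ ‖B - N‖ ^ 2 * ‖u‖ ^ 2 := sum_inner_sq_le_of_isMinOn_projResidual hUk hUmin hK
        (sq_nonneg _) hKc (Uᗮ.starProjection_apply_mem x)
    _ ≤ ‖B - N‖ ^ 2 * ‖x‖ ^ 2 := by gcongr; exact Uᗮ.norm_starProjection_apply_le x

theorem l2_opNorm_le_one_of_transpose_mul_self_eq_one [Fintype m] [Fintype r] [DecidableEq r]
    {Q : Matrix m r ℝ} (hQ : Qᵀ * Q = 1) : ‖Q‖ ≤ 1 := by
  have hQQ := l2_opNorm_conjTranspose_mul_self Q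
  rw [conjTranspose_eq_transpose_of_trivial, hQ] at hQQ
  have h1 : ‖(1 : Matrix r r ℝ)‖ ≤ 1 := by
    rw [← diagonal_one, l2_opNorm_diagonal]
    exact (pi_norm_le_iff_of_nonneg zero_le_one).2 fun _ ↦ by simp
  nlinarith [norm_nonneg Q]

theorem l2_opNorm_le_one_of_transpose_mul_self_eq_self [Fintype m] [DecidableEq m]
    {P : Matrix m m ℝ} (hP : Pᵀ * P = P) : ‖P‖ ≤ 1 := by
  have hPP := l2_opNorm_conjTranspose_mul_self P
  rw [conjTranspose_eq_transpose_of_trivial, hP] at hPP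
  nlinarith [norm_nonneg P]

theorem l2_opNorm_transpose_mul_le [Fintype m] [Fintype n] [Fintype r] [DecidableEq m]
    [DecidableEq n] [DecidableEq r]
    {Q : Matrix m r ℝ} (hQ : Qᵀ * Q = 1) (Y : Matrix m n ℝ) : ‖Qᵀ * Y‖ ≤ ‖Y‖ := by
  have hQt : ‖Qᵀ‖ ≤ 1 := by
    rw [← conjTranspose_eq_transpose_of_trivial, l2_opNorm_conjTranspose]
    exact l2_opNorm_le_one_of_transpose_mul_self_eq_one hQ
  exact (l2_opNorm_mul _ _).trans (mul_le_of_le_one_left (norm_nonneg _) hQt)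

theorem l2_opNorm_sub_mul_transpose_mul_le [Fintype m] [Fintype n] [Fintype r] [DecidableEq m]
    [DecidableEq n] [DecidableEq r] {Q : Matrix m r ℝ} (hQ : Qᵀ * Q = 1) (Y : Matrix m n ℝ) :
    ‖Y - Q * (Qᵀ * Y)‖ ≤ ‖Y‖ := by
  have hP : (1 - Q * Qᵀ)ᵀ * (1 - Q * Qᵀ) = 1 - Q * Qᵀ := by
    have hPP : Q * Qᵀ * (Q * Qᵀ) = Q * Qᵀ := by
      rw [Matrix.mul_assoc, ← Matrix.mul_assoc Qᵀ, hQ, Matrix.one_mul]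
    rw [transpose_sub, transpose_one, transpose_mul, transpose_transpose, sub_mul, one_mul,
      mul_sub, mul_one, hPP, sub_self, sub_zero]
  have hY : Y - Q * (Qᵀ * Y) = (1 - Q * Qᵀ) * Y := by
    rw [Matrix.sub_mul, Matrix.one_mul, Matrix.mul_assoc]
  rw [hY]
  exact (l2_opNorm_mul _ _).trans
    (mul_le_of_le_one_left (norm_nonneg _) (l2_opNorm_le_one_of_transpose_mul_self_eq_self hP))

theorem transpose_mul_self_sub_mul [Fintype m] [Fintype r] [DecidableEq r] {Q : Matrix m r ℝ}
    (hQ : Qᵀ * Q = 1) (A : Matrix m n ℝ) (D : Matrix r n ℝ) :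
    (A - Q * D)ᵀ * (A - Q * D) =
      (A - Q * (Qᵀ * A))ᵀ * (A - Q * (Qᵀ * A)) + (Qᵀ * A - D)ᵀ * (Qᵀ * A - D) := by
  have hQ' : ∀ X : Matrix r n ℝ, Qᵀ * (Q * X) = X := fun X ↦ by
    rw [← Matrix.mul_assoc, hQ, Matrix.one_mul]
  simp only [transpose_sub, transpose_mul, transpose_transpose, Matrix.sub_mul, Matrix.mul_sub,
    Matrix.mul_assoc, hQ']
  abel

theorem frobSq_sub_mul [Fintype m] [Fintype n] [Fintype r] [DecidableEq r] {Q : Matrix m r ℝ}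
    (hQ : Qᵀ * Q = 1) (A : Matrix m n ℝ) (D : Matrix r n ℝ) :
    frobSq (A - Q * D) = frobSq (A - Q * (Qᵀ * A)) + frobSq (Qᵀ * A - D) := by
  rw [frobSq_eq_trace, transpose_mul_self_sub_mul hQ, trace_add, ← frobSq_eq_trace,
    ← frobSq_eq_trace]

theorem l2_opNorm_sub_mul_sq_le [Fintype m] [Fintype n] [Fintype r] [DecidableEq n]
    [DecidableEq r] {Q : Matrix m r ℝ} (hQ : Qᵀ * Q = 1) (A : Matrix m n ℝ) (D : Matrix r n ℝ) :
    ‖A - Q * D‖ ^ 2 ≤ ‖A - Q * (Qᵀ * A)‖ ^ 2 + ‖Qᵀ * A - D‖ ^ 2 := by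
  simp only [sq]
  rw [← l2_opNorm_conjTranspose_mul_self, ← l2_opNorm_conjTranspose_mul_self,
    ← l2_opNorm_conjTranspose_mul_self]
  simp only [conjTranspose_eq_transpose_of_trivial]
  rw [transpose_mul_self_sub_mul hQ]
  exact norm_add_le _ _

theorem mul_transpose_mul_of_range_le [Fintype m] [Fintype n] [Fintype r] [DecidableEq n]
    [DecidableEq r] {Q : Matrix m r ℝ} (hQ : Qᵀ * Q = 1)
    {X : Matrix m n ℝ} (hX : LinearMap.range X.mulVecLin ≤ LinearMap.range Q.mulVecLin) :
    Q * (Qᵀ * X) = X := by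
  refine ext_of_mulVec_single fun j ↦ ?_
  obtain ⟨v, hv⟩ := hX ⟨Pi.single j 1, rfl⟩
  simp only [mulVecLin_apply] at hv
  rw [← mulVec_mulVec, ← mulVec_mulVec, ← hv, mulVec_mulVec v Qᵀ Q, hQ, one_mulVec]

section OrthonormalColumns

variable [Fintype m] [Fintype n] [Fintype r] [DecidableEq n] [DecidableEq r]
  {Q : Matrix m r ℝ} {A X : Matrix m n ℝ} {M : Matrix r n ℝ} {k : ℕ}

theorem frobSq_sub_mul_le_of_isMinOn (hQ : Qᵀ * Q = 1)
    (hM : IsMinOn (fun N ↦ frobSq (Qᵀ * A - N)) {N | N.rank ≤ k} M) (hXk : X.rank ≤ k)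
    (hX : LinearMap.range X.mulVecLin ≤ LinearMap.range Q.mulVecLin) :
    frobSq (A - Q * M) ≤ frobSq (A - X) := by
  rw [frobSq_sub_mul hQ A M, ← mul_transpose_mul_of_range_le hQ hX,
    frobSq_sub_mul hQ A (Qᵀ * X)]
  exact (add_le_add_iff_left _).2 (hM ((rank_mul_le_right _ _).trans hXk))

theorem l2_opNorm_sub_mul_sq_le_of_isMinOn [DecidableEq m] (hQ : Qᵀ * Q = 1) (hMk : M.rank ≤ k)
    (hM : IsMinOn (fun N ↦ frobSq (Qᵀ * A - N)) {N | N.rank ≤ k} M) (hXk : X.rank ≤ k)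
    (hX : LinearMap.range X.mulVecLin ≤ LinearMap.range Q.mulVecLin) :
    ‖A - Q * M‖ ^ 2 ≤ 2 * ‖A - X‖ ^ 2 := by
  have hres : ‖A - Q * (Qᵀ * A)‖ ≤ ‖A - X‖ := by
    have h := l2_opNorm_sub_mul_transpose_mul_le hQ (A - X)
    rwa [Matrix.mul_sub, Matrix.mul_sub, mul_transpose_mul_of_range_le hQ hX,
      sub_sub_sub_cancel_right] at h
  have hcore : ‖Qᵀ * A - M‖ ≤ ‖A - X‖ :=
    calc ‖Qᵀ * A - M‖ ≤ ‖Qᵀ * A - Qᵀ * X‖ :=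
          l2_opNorm_sub_le_of_isMinOn_frobSq hMk hM ((rank_mul_le_right _ _).trans hXk)
      _ = ‖Qᵀ * (A - X)‖ := by rw [Matrix.mul_sub]
      _ ≤ ‖A - X‖ := l2_opNorm_transpose_mul_le hQ _
  refine (l2_opNorm_sub_mul_sq_le hQ A M).trans ?_
  nlinarith [norm_nonneg (A - Q * (Qᵀ * A)), norm_nonneg (Qᵀ * A - M)]

end OrthonormalColumns

end Matrix

theorem best_rank_k_in_column_space_general
    {m n r r' : ℕ} (A : Matrix (Fin m) (Fin n) ℝ) (C : Matrix (Fin m) (Fin r) ℝ)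
    (k : ℕ)
    (Q : Matrix (Fin m) (Fin r') ℝ) (hQ : Qᵀ * Q = 1)
    (hspan : LinearMap.range Q.mulVecLin = LinearMap.range C.mulVecLin)
    (M : Matrix (Fin r') (Fin n) ℝ) (hMrank : M.rank ≤ k)
    (hMbest : ∀ N : Matrix (Fin r') (Fin n) ℝ, N.rank ≤ k →
      frobSq (Qᵀ * A - M) ≤ frobSq (Qᵀ * A - N)) :
    frobSq (A - Q * M) = frobSqErrIn A C k ∧
    spec (A - Q * M) ^ 2 ≤ 2 * specErrIn A C k ^ 2 := by
  have hQM : LinearMap.range (Q * M).mulVecLin ≤ LinearMap.range C.mulVecLin := by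
    rw [← hspan, mulVecLin_mul]
    exact LinearMap.range_comp_le_range _ _
  constructor
  · refine Eq.symm (IsLeast.csInf_eq
      ⟨⟨Q * M, (rank_mul_le_right _ _).trans hMrank, hQM, rfl⟩, ?_⟩)
    rintro _ ⟨X, hXk, hXC, rfl⟩
    exact frobSq_sub_mul_le_of_isMinOn hQ hMbest hXk (hspan ▸ hXC)
  · rw [specErrIn]
    refine sq_le_mul_csInf_sq ⟨_, 0, by simp, by simp, rfl⟩ (norm_nonneg _) two_pos ?_
    rintro _ ⟨X, hXk, hXC, rfl⟩
    exact ⟨norm_nonneg _,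
      l2_opNorm_sub_mul_sq_le_of_isMinOn hQ hMrank hMbest hXk (hspan ▸ hXC)⟩

/-- **Computing `Π^F_{C,k}(A)` exactly and `Π²_{C,k}(A)` up to a factor `2`**
(Lemma 2.2 of Boutsidis–Drineas–Magdon-Ismail): if `Q` has orthonormal columns spanning
the column space of `C`, and `M` is a best rank-`k` approximation of `QᵀA` in the
Frobenius norm, then `‖A - Q M‖_F² = ‖A - Π^F_{C,k}(A)‖_F²` and
`‖A - Q M‖₂² ≤ 2 ‖A - Π²_{C,k}(A)‖₂²`. -/
theorem best_rank_k_in_column_space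
    {m n r r' : ℕ} (A : Matrix (Fin m) (Fin n) ℝ) (C : Matrix (Fin m) (Fin r) ℝ)
    (k : ℕ) (hk : k < r)
    (Q : Matrix (Fin m) (Fin r') ℝ) (hQ : Qᵀ * Q = 1)
    (hspan : LinearMap.range Q.mulVecLin = LinearMap.range C.mulVecLin)
    (M : Matrix (Fin r') (Fin n) ℝ) (hMrank : M.rank ≤ k)
    (hMbest : ∀ N : Matrix (Fin r') (Fin n) ℝ, N.rank ≤ k →
      frobSq (Qᵀ * A - M) ≤ frobSq (Qᵀ * A - N)) :
    frobSq (A - Q * M) = frobSqErrIn A C k ∧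
    spec (A - Q * M) ^ 2 ≤ 2 * specErrIn A C k ^ 2 :=
  best_rank_k_in_column_space_general A C k Q hQ hspan M hMrank hMbest
end

section
/- Let A ∈ R^{m×n}, B ∈ R^{m×k}, Z ∈ R^{n×k} and E ∈ R^{m×n} satisfy A = B Zᵀ + E, E Z = 0 (the m×k zero matrix), and ZᵀZ = I_k. Let S ∈ R^{n×r} be any matrix such that rank(ZᵀS) = k, and set C = A S ∈ R^{m×r}. Then for ξ ∈ {2, F}: ‖A − Π^ξ_{C,k}(A)‖_ξ² ≤ ‖E‖_ξ² + ‖E S (ZᵀS)⁺‖_ξ², where (ZᵀS)⁺ is the Moore–Penrose pseudoinverse of ZᵀS. -/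
open Matrix MeasureTheory

section Aux

open scoped RealInnerProductSpace

/-- The continuous linear map associated to a matrix. -/
noncomputable def clmOf {a b : ℕ} (M : Matrix (Fin a) (Fin b) ℝ) :
    EuclideanSpace ℝ (Fin b) →L[ℝ] EuclideanSpace ℝ (Fin a) :=
  LinearMap.toContinuousLinearMap (Matrix.toEuclideanLin M)

lemma spec_eq_clmOf {a b : ℕ} (M : Matrix (Fin a) (Fin b) ℝ) : spec M = ‖clmOf M‖ := rfl

lemma spec_nonneg' {a b : ℕ} (M : Matrix (Fin a) (Fin b) ℝ) : 0 ≤ spec M :=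
  norm_nonneg _

lemma clmOf_apply {a b : ℕ} (M : Matrix (Fin a) (Fin b) ℝ) (x : EuclideanSpace ℝ (Fin b)) :
    clmOf M x = Matrix.toEuclideanLin M x := rfl

lemma clmOf_mul {a b c : ℕ} (M : Matrix (Fin a) (Fin b) ℝ) (N : Matrix (Fin b) (Fin c) ℝ)
    (x : EuclideanSpace ℝ (Fin c)) : clmOf (M * N) x = clmOf M (clmOf N x) := by
  simp [clmOf_apply, Matrix.toEuclideanLin_apply, Matrix.mulVec_mulVec]

lemma clmOf_one {a : ℕ} (x : EuclideanSpace ℝ (Fin a)) :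
    clmOf (1 : Matrix (Fin a) (Fin a) ℝ) x = x := by
  simp [clmOf_apply, Matrix.toEuclideanLin_apply]

lemma clmOf_zero {a b : ℕ} (x : EuclideanSpace ℝ (Fin b)) :
    clmOf (0 : Matrix (Fin a) (Fin b) ℝ) x = 0 := by
  simp [clmOf_apply, Matrix.toEuclideanLin_apply]

lemma clmOf_sub {a b : ℕ} (M N : Matrix (Fin a) (Fin b) ℝ) (x : EuclideanSpace ℝ (Fin b)) :
    clmOf (M - N) x = clmOf M x - clmOf N x := by
  simp [clmOf_apply, map_sub]

lemma toEuclideanLin_transpose {a b : ℕ} (M : Matrix (Fin a) (Fin b) ℝ) :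
    Matrix.toEuclideanLin Mᵀ = LinearMap.adjoint (Matrix.toEuclideanLin M) := by
  rw [← Matrix.toEuclideanLin_conjTranspose_eq_adjoint]
  congr 1

lemma inner_clmOf {a b : ℕ} (M : Matrix (Fin a) (Fin b) ℝ) (x : EuclideanSpace ℝ (Fin b))
    (y : EuclideanSpace ℝ (Fin a)) : ⟪clmOf M x, y⟫ = ⟪x, clmOf Mᵀ y⟫ := by
  rw [clmOf_apply, clmOf_apply, toEuclideanLin_transpose, LinearMap.adjoint_inner_right]

lemma spec_transpose' {a b : ℕ} (M : Matrix (Fin a) (Fin b) ℝ) : spec Mᵀ = spec M := by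
  rw [spec_eq_clmOf, spec_eq_clmOf, clmOf, clmOf, toEuclideanLin_transpose,
    LinearMap.adjoint_toContinuousLinearMap]
  exact LinearIsometryEquiv.norm_map ContinuousLinearMap.adjoint _

lemma clmOf_isometry {a b : ℕ} (Z : Matrix (Fin a) (Fin b) ℝ) (hZ : Zᵀ * Z = 1)
    (y : EuclideanSpace ℝ (Fin b)) : ‖clmOf Z y‖ = ‖y‖ := by
  have h2 : ‖clmOf Z y‖ ^ 2 = ‖y‖ ^ 2 := by
    rw [← real_inner_self_eq_norm_sq, ← real_inner_self_eq_norm_sq, inner_clmOf,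
      ← clmOf_mul, hZ, clmOf_one]
  calc ‖clmOf Z y‖ = Real.sqrt (‖clmOf Z y‖ ^ 2) := (Real.sqrt_sq (norm_nonneg _)).symm
    _ = Real.sqrt (‖y‖ ^ 2) := by rw [h2]
    _ = ‖y‖ := Real.sqrt_sq (norm_nonneg _)

lemma idem_full_rank_eq_one {k : ℕ} (Q : Matrix (Fin k) (Fin k) ℝ)
    (h1 : Q * Q = Q) (h2 : Q.rank = k) : Q = 1 := by
  have hsurj : Function.Surjective Q.mulVecLin := by
    rw [← LinearMap.range_eq_top]
    apply Submodule.eq_top_of_finrank_eq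
    rw [Matrix.rank] at h2
    simp [h2]
  have hfix : ∀ y : Fin k → ℝ, Q *ᵥ y = y := by
    intro y
    obtain ⟨x, hx⟩ := hsurj y
    have h3 : Q *ᵥ (Q *ᵥ x) = Q *ᵥ x := by rw [Matrix.mulVec_mulVec, h1]
    rw [Matrix.mulVecLin_apply] at hx
    rw [hx] at h3
    exact h3
  ext i j
  have := congrFun (hfix (Pi.single j 1)) i
  rw [Matrix.mulVec_single] at this
  simpa [Matrix.one_apply, Pi.single_apply, eq_comm] using this

lemma frobSq_eq_trace {a b : ℕ} (M : Matrix (Fin a) (Fin b) ℝ) :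
    frobSq M = (M * Mᵀ).trace := by
  simp [frobSq, Matrix.trace, Matrix.diag, Matrix.mul_apply, sq]

lemma frobSq_nonneg' {a b : ℕ} (M : Matrix (Fin a) (Fin b) ℝ) : 0 ≤ frobSq M := by
  unfold frobSq
  positivity

end Aux

section Main

open scoped RealInnerProductSpace

/-- **Column reconstruction from matrix factorizations** (Lemma 3.1 of
Boutsidis–Drineas–Magdon-Ismail): if `A = B Zᵀ + E` with `E Z = 0` and `ZᵀZ = I_k`, and
`S` is such that `rank(ZᵀS) = k`, then, with `C = A S`, for both `ξ = 2` and `ξ = F`,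
`‖A - Π^ξ_{C,k}(A)‖_ξ² ≤ ‖E‖_ξ² + ‖E S (ZᵀS)⁺‖_ξ²`. -/
theorem generic_column_reconstruction
    {m n k r : ℕ} (A E : Matrix (Fin m) (Fin n) ℝ)
    (B : Matrix (Fin m) (Fin k) ℝ) (Z : Matrix (Fin n) (Fin k) ℝ)
    (hA : A = B * Zᵀ + E) (hEZ : E * Z = 0) (hZ : Zᵀ * Z = 1)
    (S : Matrix (Fin n) (Fin r) ℝ) (hrank : (Zᵀ * S).rank = k)
    (P : Matrix (Fin r) (Fin k) ℝ) (hP : IsMoorePenrose (Zᵀ * S) P) :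
    specErrIn A (A * S) k ^ 2 ≤ spec E ^ 2 + spec (E * S * P) ^ 2 ∧
    frobSqErrIn A (A * S) k ≤ frobSq E + frobSq (E * S * P) := by
  -- `(ZᵀS) P = 1`
  have hQQ : (Zᵀ * S * P) * (Zᵀ * S * P) = Zᵀ * S * P := by
    rw [← Matrix.mul_assoc, hP.1]
  have hQrank : (Zᵀ * S * P).rank = k := by
    refine le_antisymm ?_ ?_
    · exact le_trans (Matrix.rank_mul_le_left _ _) (le_of_eq hrank)
    · have h := Matrix.rank_mul_le_left (Zᵀ * S * P) (Zᵀ * S)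
      rw [hP.1, hrank] at h
      exact h
  have hQ1 : Zᵀ * S * P = 1 := idem_full_rank_eq_one _ hQQ hQrank
  -- the key identity `A - A S P Zᵀ = E - E S P Zᵀ`
  have h1 : A * S * P = B + E * S * P := by
    rw [hA, Matrix.add_mul, Matrix.add_mul,
      Matrix.mul_assoc B Zᵀ S, Matrix.mul_assoc B (Zᵀ * S) P, hQ1, Matrix.mul_one]
  have hkey : A - A * S * P * Zᵀ = E - E * S * P * Zᵀ := by
    rw [h1, hA, Matrix.add_mul]
    abel
  -- orthogonality facts
  have hNt : (E * S * P * Zᵀ)ᵀ = Z * (E * S * P)ᵀ := by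
    rw [Matrix.transpose_mul (E * S * P) Zᵀ, Matrix.transpose_transpose]
  have hENt : E * (E * S * P * Zᵀ)ᵀ = 0 := by
    rw [hNt, ← Matrix.mul_assoc, hEZ, Matrix.zero_mul]
  have hNE : (E * S * P * Zᵀ) * Eᵀ = 0 := by
    have h := congrArg Matrix.transpose hENt
    rwa [Matrix.transpose_mul, Matrix.transpose_transpose, Matrix.transpose_zero] at h
  have hNNt : (E * S * P * Zᵀ) * (E * S * P * Zᵀ)ᵀ = (E * S * P) * (E * S * P)ᵀ := by
    rw [hNt, ← Matrix.mul_assoc, Matrix.mul_assoc (E * S * P) Zᵀ Z, hZ, Matrix.mul_one]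
  -- Frobenius bound
  have hfrob : frobSq (A - A * S * P * Zᵀ) = frobSq E + frobSq (E * S * P) := by
    rw [hkey, frobSq_eq_trace, frobSq_eq_trace, frobSq_eq_trace]
    have expand : (E - E * S * P * Zᵀ) * (E - E * S * P * Zᵀ)ᵀ =
        E * Eᵀ - E * (E * S * P * Zᵀ)ᵀ - (E * S * P * Zᵀ) * Eᵀ +
          (E * S * P * Zᵀ) * (E * S * P * Zᵀ)ᵀ := by
      rw [Matrix.transpose_sub, Matrix.sub_mul, Matrix.mul_sub, Matrix.mul_sub]
      abel
    rw [expand, hENt, hNE, hNNt]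
    simp
  -- spectral bound
  have hspec : spec (A - A * S * P * Zᵀ) ^ 2 ≤ spec E ^ 2 + spec (E * S * P) ^ 2 := by
    rw [hkey]
    have h0 : (0 : ℝ) ≤ spec E ^ 2 + spec (E * S * P) ^ 2 := by positivity
    have hbd : spec (E - E * S * P * Zᵀ) ≤
        Real.sqrt (spec E ^ 2 + spec (E * S * P) ^ 2) := by
      rw [← spec_transpose' (E - E * S * P * Zᵀ), spec_eq_clmOf]
      refine ContinuousLinearMap.opNorm_le_bound _ (Real.sqrt_nonneg _) fun x => ?_
      have hDt : (E - E * S * P * Zᵀ)ᵀ = Eᵀ - (E * S * P * Zᵀ)ᵀ := Matrix.transpose_sub _ _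
      have h9 : ‖clmOf (E - E * S * P * Zᵀ)ᵀ x‖ ^ 2 =
          ‖clmOf Eᵀ x‖ ^ 2 + ‖clmOf (E * S * P * Zᵀ)ᵀ x‖ ^ 2 := by
        rw [hDt, clmOf_sub, norm_sub_sq_real]
        have hz : ⟪clmOf Eᵀ x, clmOf (E * S * P * Zᵀ)ᵀ x⟫ = 0 := by
          rw [inner_clmOf, Matrix.transpose_transpose, ← clmOf_mul, hENt, clmOf_zero,
            inner_zero_right]
        rw [hz]
        ring
      have hE' : ‖clmOf Eᵀ x‖ ≤ spec E * ‖x‖ := by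
        have h := (clmOf Eᵀ).le_opNorm x
        rwa [← spec_eq_clmOf, spec_transpose'] at h
      have hN' : ‖clmOf (E * S * P * Zᵀ)ᵀ x‖ ≤ spec (E * S * P) * ‖x‖ := by
        rw [hNt, clmOf_mul, clmOf_isometry Z hZ]
        have h := (clmOf (E * S * P)ᵀ).le_opNorm x
        rwa [← spec_eq_clmOf, spec_transpose'] at h
      have h10 : ‖clmOf (E - E * S * P * Zᵀ)ᵀ x‖ ^ 2 ≤
          (spec E ^ 2 + spec (E * S * P) ^ 2) * ‖x‖ ^ 2 := by
        rw [h9]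
        calc ‖clmOf Eᵀ x‖ ^ 2 + ‖clmOf (E * S * P * Zᵀ)ᵀ x‖ ^ 2
            ≤ (spec E * ‖x‖) ^ 2 + (spec (E * S * P) * ‖x‖) ^ 2 :=
              add_le_add (pow_le_pow_left₀ (norm_nonneg _) hE' 2)
                (pow_le_pow_left₀ (norm_nonneg _) hN' 2)
          _ = (spec E ^ 2 + spec (E * S * P) ^ 2) * ‖x‖ ^ 2 := by ring
      calc ‖clmOf (E - E * S * P * Zᵀ)ᵀ x‖
          = Real.sqrt (‖clmOf (E - E * S * P * Zᵀ)ᵀ x‖ ^ 2) :=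
            (Real.sqrt_sq (norm_nonneg _)).symm
        _ ≤ Real.sqrt ((spec E ^ 2 + spec (E * S * P) ^ 2) * ‖x‖ ^ 2) :=
            Real.sqrt_le_sqrt h10
        _ = Real.sqrt (spec E ^ 2 + spec (E * S * P) ^ 2) * ‖x‖ := by
            rw [Real.sqrt_mul h0, Real.sqrt_sq (norm_nonneg _)]
    calc spec (E - E * S * P * Zᵀ) ^ 2
        ≤ Real.sqrt (spec E ^ 2 + spec (E * S * P) ^ 2) ^ 2 :=
          pow_le_pow_left₀ (spec_nonneg' _) hbd 2
      _ = spec E ^ 2 + spec (E * S * P) ^ 2 := Real.sq_sqrt h0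
  -- the candidate matrix is admissible
  have hrankX : (A * S * P * Zᵀ).rank ≤ k := by
    refine le_trans (Matrix.rank_mul_le_right (A * S * P) Zᵀ) ?_
    simpa using Matrix.rank_le_card_height Zᵀ
  have hrangeX : LinearMap.range (A * S * P * Zᵀ).mulVecLin ≤
      LinearMap.range (A * S).mulVecLin := by
    have hsplit : A * S * P * Zᵀ = (A * S) * (P * Zᵀ) := by
      rw [Matrix.mul_assoc (A * S) P Zᵀ]
    rw [hsplit, Matrix.mulVecLin_mul]
    exact LinearMap.range_comp_le_range _ _
  constructor
  · -- spectral part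
    have hmem : spec (A - A * S * P * Zᵀ) ∈
        {e : ℝ | ∃ X : Matrix (Fin m) (Fin n) ℝ, X.rank ≤ k ∧
          LinearMap.range X.mulVecLin ≤ LinearMap.range (A * S).mulVecLin ∧
          e = spec (A - X)} :=
      ⟨A * S * P * Zᵀ, hrankX, hrangeX, rfl⟩
    have hbdd : BddBelow {e : ℝ | ∃ X : Matrix (Fin m) (Fin n) ℝ, X.rank ≤ k ∧
        LinearMap.range X.mulVecLin ≤ LinearMap.range (A * S).mulVecLin ∧
        e = spec (A - X)} := by
      refine ⟨0, fun e he => ?_⟩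
      obtain ⟨X, -, -, rfl⟩ := he
      exact spec_nonneg' _
    have hle : specErrIn A (A * S) k ≤ spec (A - A * S * P * Zᵀ) := csInf_le hbdd hmem
    have hnn : 0 ≤ specErrIn A (A * S) k := by
      apply Real.sInf_nonneg
      rintro e ⟨X, -, -, rfl⟩
      exact spec_nonneg' _
    calc specErrIn A (A * S) k ^ 2 ≤ spec (A - A * S * P * Zᵀ) ^ 2 :=
          pow_le_pow_left₀ hnn hle 2
      _ ≤ spec E ^ 2 + spec (E * S * P) ^ 2 := hspec
  · -- Frobenius part
    have hmem : frobSq (A - A * S * P * Zᵀ) ∈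
        {e : ℝ | ∃ X : Matrix (Fin m) (Fin n) ℝ, X.rank ≤ k ∧
          LinearMap.range X.mulVecLin ≤ LinearMap.range (A * S).mulVecLin ∧
          e = frobSq (A - X)} :=
      ⟨A * S * P * Zᵀ, hrankX, hrangeX, rfl⟩
    have hbdd : BddBelow {e : ℝ | ∃ X : Matrix (Fin m) (Fin n) ℝ, X.rank ≤ k ∧
        LinearMap.range X.mulVecLin ≤ LinearMap.range (A * S).mulVecLin ∧
        e = frobSq (A - X)} := by
      refine ⟨0, fun e he => ?_⟩
      obtain ⟨X, -, -, rfl⟩ := he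
      exact frobSq_nonneg' _
    calc frobSqErrIn A (A * S) k ≤ frobSq (A - A * S * P * Zᵀ) := csInf_le hbdd hmem
      _ = frobSq E + frobSq (E * S * P) := hfrob

end Main
end

section
/- Let v_1,…,v_n ∈ R^k (with k < n) satisfy Σ_{i=1}^n v_i v_iᵀ = I_k, and let a_1,…,a_n ∈ R^ℓ be arbitrary vectors. Then for every integer r with k < r ≤ n there exist nonnegative weights s_1,…,s_n, at most r of which are nonzero, such that λ_k(Σ_{i=1}^n s_i v_i v_iᵀ) ≥ (1 − √(k/r))² and Tr(Σ_{i=1}^n s_i a_i a_iᵀ) ≤ Tr(Σ_{i=1}^n a_i a_iᵀ) = Σ_{i=1}^n ‖a_i‖₂². -/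
/-!
Batson–Spielman–Srivastava barrier argument with a lower barrier only. Put `ε = √(k/r)` and
`Φ_l(A) = tr (A - l • 1)⁻¹`. Starting from `A = 0` and `l = -k/ε`, where `Φ_l(A) = ε`, take `r`
steps, each raising `l` by one and adding a single term `t • vᵢvᵢᵀ` while keeping `A - l • 1`
positive definite and `Φ_l(A) ≤ ε`. By Sherman–Morrison a term is admissible once `1/t` is at
most the BSS quantity `L(vᵢ)`, and since `∑ vᵢvᵢᵀ = 1`, Cauchy–Schwarz over the eigenvalues gives
`∑ᵢ L(vᵢ) ≥ 1 - ε`. The normalized costs `(1 - ε)‖aᵢ‖² / ∑ⱼ‖aⱼ‖²` sum to at most `1 - ε`, so some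
`i` has cost at most `L(vᵢ)` and each step spends at most `∑ⱼ‖aⱼ‖² / (1 - ε)`. After `r` steps
`λ_min(A) > r - k/ε = r(1 - ε)`, and rescaling the weights by `(1 - ε)/r` gives both bounds.
-/

open Matrix MeasureTheory

open Finset

theorem Finset.exists_le_and_pos_of_sum_le {ι R : Type*} [AddCommMonoid R] [LinearOrder R]
    [IsOrderedCancelAddMonoid R] {s : Finset ι} {u L : ι → R} (hu : ∀ i ∈ s, 0 ≤ u i)
    (hle : ∑ i ∈ s, u i ≤ ∑ i ∈ s, L i) (hpos : 0 < ∑ i ∈ s, L i) :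
    ∃ i ∈ s, u i ≤ L i ∧ 0 < L i := by
  by_contra! h
  obtain ⟨j, hj, hLj⟩ := exists_lt_of_sum_lt (f := fun _ => (0 : R)) (by simpa using hpos)
  have hLu : ∀ i ∈ s, L i ≤ u i := fun i hi =>
    (le_total (u i) (L i)).elim (fun hle => (h i hi hle).trans (hu i hi)) id
  have hLuj : L j < u j := lt_of_not_ge fun hle => (h j hj hle).not_gt hLj
  exact (sum_lt_sum hLu ⟨j, hj, hLuj⟩).not_ge hle

theorem ncard_support_add_single_le {ι M : Type*} [Finite ι] [DecidableEq ι] [AddZeroClass M]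
    (w : ι → M) (i : ι) (t : M) :
    {j | (w + Pi.single i t : ι → M) j ≠ 0}.ncard ≤ {j | w j ≠ 0}.ncard + 1 := by
  have hsub : {j | (w + Pi.single i t : ι → M) j ≠ 0} ⊆ {j | w j ≠ 0} ∪ {i} :=
    (Function.support_add _ _).trans (Set.union_subset_union_right _ Pi.support_single_subset)
  calc _ ≤ ({j | w j ≠ 0} ∪ {i}).ncard := Set.ncard_le_ncard hsub (Set.toFinite _)
    _ ≤ _ := (Set.ncard_union_le _ _).trans (by rw [Set.ncard_singleton])

theorem sum_inv_sub_one_sub_sum_inv_bounds {ι : Type*} [Fintype ι] [Nonempty ι] {x : ι → ℝ}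
    (hx : ∀ i, 1 < x i) (hsum : ∑ i, (x i)⁻¹ ≤ 1) :
    0 < ∑ i, (x i - 1)⁻¹ - ∑ i, (x i)⁻¹ ∧
      (∑ i, (x i - 1)⁻¹ - ∑ i, (x i)⁻¹) * (1 + (∑ i, (x i - 1)⁻¹ - ∑ i, (x i)⁻¹)) ≤
        ∑ i, ((x i - 1)⁻¹) ^ 2 := by
  set Δ := ∑ i, (x i - 1)⁻¹ - ∑ i, (x i)⁻¹
  have hx0 : ∀ i, 0 < x i - 1 := fun i => sub_pos.mpr (hx i)
  have hxpos : ∀ i, 0 < x i := fun i => one_pos.trans (hx i)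
  have hΔ : Δ = ∑ i, ((x i - 1) * x i)⁻¹ := by
    simp only [Δ, ← sum_sub_distrib]
    refine sum_congr rfl fun i _ => ?_
    have := hx0 i
    have := hxpos i
    field_simp
    ring
  have hsq : ∑ i, ((x i - 1)⁻¹) ^ 2 = Δ + ∑ i, ((x i - 1) * x i)⁻¹ ^ 2 / (x i)⁻¹ := by
    rw [hΔ, ← sum_add_distrib]
    refine sum_congr rfl fun i _ => ?_
    have := hx0 i
    have := hxpos i
    field_simp
    ring
  have hCS : Δ ^ 2 ≤ ∑ i, ((x i - 1) * x i)⁻¹ ^ 2 / (x i)⁻¹ := by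
    have hg : 0 < ∑ i, (x i)⁻¹ := sum_pos (fun i _ => inv_pos.mpr (hxpos i)) univ_nonempty
    calc Δ ^ 2 ≤ Δ ^ 2 / ∑ i, (x i)⁻¹ := le_div_self (sq_nonneg _) hg hsum
      _ ≤ _ := hΔ ▸ sq_sum_div_le_sum_sq_div univ _ fun i _ => inv_pos.mpr (hxpos i)
  refine ⟨hΔ ▸ sum_pos (fun i _ => by have := hx0 i; have := hxpos i; positivity) univ_nonempty, ?_⟩
  nlinarith

namespace Matrix

section Conjugation
variable {m R : Type*} [Fintype m] [DecidableEq m] [CommRing R] [StarRing R]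
  (u : unitary (Matrix m m R))

theorem trace_conjStarAlgAut (X : Matrix m m R) :
    (Unitary.conjStarAlgAut R _ u X).trace = X.trace := by
  rw [Unitary.conjStarAlgAut_apply, trace_mul_cycle, Unitary.coe_star_mul_self, one_mul]

theorem inv_conjStarAlgAut (X : Matrix m m R) :
    (Unitary.conjStarAlgAut R _ u X)⁻¹ = Unitary.conjStarAlgAut R _ u X⁻¹ := by
  have hu : (u : Matrix m m R)⁻¹ = star (u : Matrix m m R) :=
    inv_eq_left_inv (Unitary.star_mul_self_of_mem u.2)
  have hu_star : (star (u : Matrix m m R))⁻¹ = u :=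
    inv_eq_left_inv (Unitary.mul_star_self_of_mem u.2)
  simp only [Unitary.conjStarAlgAut_apply, mul_inv_rev, hu, hu_star, mul_assoc]

end Conjugation

namespace IsHermitian
variable {m : Type*} [Fintype m] [DecidableEq m] {A : Matrix m m ℝ} (hA : A.IsHermitian)

theorem sub_smul_one_eq_conj (c : ℝ) :
    A - c • 1 = Unitary.conjStarAlgAut ℝ _ hA.eigenvectorUnitary
      (diagonal fun i => hA.eigenvalues i - c) := by
  conv_lhs => rw [hA.spectral_theorem]
  rw [← map_one (Unitary.conjStarAlgAut ℝ _ hA.eigenvectorUnitary), ← map_smul, ← map_sub,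
    smul_one_eq_diagonal, diagonal_sub]
  rfl

theorem posSemidef_sub_smul_one_iff (c : ℝ) :
    (A - c • 1).PosSemidef ↔ ∀ i, c ≤ hA.eigenvalues i := by
  rw [hA.sub_smul_one_eq_conj, Unitary.conjStarAlgAut_apply,
    Unitary.isUnit_coe.posSemidef_star_right_conjugate_iff, posSemidef_diagonal_iff]
  simp [sub_nonneg]

theorem posDef_sub_smul_one_iff (c : ℝ) :
    (A - c • 1).PosDef ↔ ∀ i, c < hA.eigenvalues i := by
  rw [hA.sub_smul_one_eq_conj, Unitary.conjStarAlgAut_apply,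
    Unitary.isUnit_coe.posDef_star_right_conjugate_iff, posDef_diagonal_iff]
  simp [sub_pos]

theorem inv_sub_smul_one_eq_conj {c : ℝ} (hc : ∀ i, hA.eigenvalues i ≠ c) :
    (A - c • 1)⁻¹ = Unitary.conjStarAlgAut ℝ _ hA.eigenvectorUnitary
      (diagonal fun i => (hA.eigenvalues i - c)⁻¹) := by
  rw [hA.sub_smul_one_eq_conj, inv_conjStarAlgAut]
  congr 1
  refine inv_eq_left_inv ?_
  rw [diagonal_mul_diagonal, ← diagonal_one]
  congr 1
  ext i
  exact inv_mul_cancel₀ (sub_ne_zero.mpr (hc i))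

theorem trace_inv_sub_smul_one {c : ℝ} (hc : ∀ i, hA.eigenvalues i ≠ c) :
    ((A - c • 1)⁻¹).trace = ∑ i, (hA.eigenvalues i - c)⁻¹ := by
  rw [hA.inv_sub_smul_one_eq_conj hc, trace_conjStarAlgAut, trace_diagonal]

theorem trace_inv_sub_smul_one_mul_self {c : ℝ} (hc : ∀ i, hA.eigenvalues i ≠ c) :
    ((A - c • 1)⁻¹ * (A - c • 1)⁻¹).trace = ∑ i, ((hA.eigenvalues i - c)⁻¹) ^ 2 := by
  rw [hA.inv_sub_smul_one_eq_conj hc, ← map_mul, trace_conjStarAlgAut, diagonal_mul_diagonal,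
    trace_diagonal]
  simp only [sq]

end IsHermitian

section ShermanMorrison
variable {m K : Type*} [Fintype m] [DecidableEq m] [Field K]

theorem inv_add_vecMulVec {M : Matrix m m K} (hM : IsUnit M.det) (u w : m → K)
    (h : 1 + w ⬝ᵥ (M⁻¹ *ᵥ u) ≠ 0) :
    (M + vecMulVec u w)⁻¹ =
      M⁻¹ - (1 + w ⬝ᵥ (M⁻¹ *ᵥ u))⁻¹ • vecMulVec (M⁻¹ *ᵥ u) (w ᵥ* M⁻¹) := by
  refine inv_eq_right_inv ?_
  set γ := (1 + w ⬝ᵥ (M⁻¹ *ᵥ u))⁻¹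
  have hγ : γ * (1 + w ⬝ᵥ (M⁻¹ *ᵥ u)) = 1 := inv_mul_cancel₀ h
  rw [Matrix.add_mul, Matrix.mul_sub, Matrix.mul_sub, mul_nonsing_inv M hM, Matrix.mul_smul,
    Matrix.mul_smul, mul_vecMulVec, mulVec_mulVec, mul_nonsing_inv M hM, one_mulVec,
    vecMulVec_mul, vecMulVec_mul_vecMulVec, vecMulVec_smul, smul_smul,
    show γ * (w ⬝ᵥ (M⁻¹ *ᵥ u)) = 1 - γ by linear_combination hγ]
  module

theorem trace_inv_add_vecMulVec {M : Matrix m m K} (hM : IsUnit M.det) (u w : m → K)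
    (h : 1 + w ⬝ᵥ (M⁻¹ *ᵥ u) ≠ 0) :
    ((M + vecMulVec u w)⁻¹).trace =
      M⁻¹.trace - w ⬝ᵥ ((M⁻¹ * M⁻¹) *ᵥ u) / (1 + w ⬝ᵥ (M⁻¹ *ᵥ u)) := by
  rw [inv_add_vecMulVec hM u w h, trace_sub, trace_smul, trace_vecMulVec,
    dotProduct_comm (M⁻¹ *ᵥ u), ← dotProduct_mulVec, mulVec_mulVec, smul_eq_mul, inv_mul_eq_div]

end ShermanMorrison

end Matrix

section Barrier
variable {m ι : Type*} [Fintype m] [DecidableEq m] [Fintype ι]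

theorem sum_dotProduct_mulVec_eq_trace {R : Type*} [CommSemiring R] {v : ι → m → R}
    (hv : ∑ i, vecMulVec (v i) (v i) = 1) (X : Matrix m m R) :
    ∑ i, v i ⬝ᵥ (X *ᵥ v i) = X.trace := by
  have h : ∀ w : m → R, w ⬝ᵥ (X *ᵥ w) = (X * vecMulVec w w).trace := fun w => by
    rw [mul_vecMulVec, trace_vecMulVec, dotProduct_comm]
  simp only [h, ← trace_sum, ← Matrix.mul_sum, hv, Matrix.mul_one]

/-- The lower-barrier quantity `L(v)` of Batson–Spielman–Srivastava, for `N = A - l' • 1` and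
`Δ = tr N⁻¹ - tr (A - l • 1)⁻¹`. -/
noncomputable def barrierThreshold (N : Matrix m m ℝ) (Δ : ℝ) (v : m → ℝ) : ℝ :=
  v ⬝ᵥ ((N⁻¹ * N⁻¹) *ᵥ v) / Δ - v ⬝ᵥ (N⁻¹ *ᵥ v)

theorem sum_barrierThreshold {v : ι → m → ℝ} (hv : ∑ i, vecMulVec (v i) (v i) = 1)
    (N : Matrix m m ℝ) (Δ : ℝ) :
    ∑ i, barrierThreshold N Δ (v i) = (N⁻¹ * N⁻¹).trace / Δ - N⁻¹.trace := by
  simp only [barrierThreshold, sum_sub_distrib, ← sum_div, sum_dotProduct_mulVec_eq_trace hv]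

theorem Matrix.PosDef.add_barrierThreshold_inv_smul {N : Matrix m m ℝ} (hN : N.PosDef) {Δ : ℝ}
    (hΔ : 0 < Δ) {v : m → ℝ} (hL : 0 < barrierThreshold N Δ v) :
    (N + (barrierThreshold N Δ v)⁻¹ • vecMulVec v v).PosDef ∧
      ((N + (barrierThreshold N Δ v)⁻¹ • vecMulVec v v)⁻¹).trace = N⁻¹.trace - Δ := by
  set L := barrierThreshold N Δ v
  set p := v ⬝ᵥ ((N⁻¹ * N⁻¹) *ᵥ v) with hp_def
  set q := v ⬝ᵥ (N⁻¹ *ᵥ v) with hq_def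
  have hLpq : L + q = p / Δ := by simp only [L, barrierThreshold]; ring
  have hq : 0 ≤ q := by simpa using hN.inv.posSemidef.dotProduct_mulVec_nonneg v
  have ht : 0 < L⁻¹ := inv_pos.mpr hL
  refine ⟨hN.add_posSemidef (by simpa using (posSemidef_vecMulVec_self_star v).smul ht.le), ?_⟩
  have hden : 1 + v ⬝ᵥ (N⁻¹ *ᵥ (L⁻¹ • v)) = (L + q) / L := by
    rw [mulVec_smul, dotProduct_smul, smul_eq_mul, ← hq_def]
    field_simp
  rw [← smul_vecMulVec, trace_inv_add_vecMulVec hN.det_pos.ne'.isUnit _ _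
    (by rw [hden]; positivity), hden, mulVec_smul, dotProduct_smul, smul_eq_mul, ← hp_def, hLpq]
  congr 1
  have hp : p ≠ 0 := fun h0 => by rw [h0, zero_div] at hLpq; linarith
  field_simp

theorem Matrix.PosDef.lowerBarrier_shift [Nonempty m] {A : Matrix m m ℝ} {l : ℝ}
    (hA : (A - l • 1).PosDef) (hφ : ((A - l • 1)⁻¹).trace < 1) :
    (A - (l + 1) • 1).PosDef ∧
      0 < ((A - (l + 1) • 1)⁻¹).trace - ((A - l • 1)⁻¹).trace ∧
      (((A - (l + 1) • 1)⁻¹).trace - ((A - l • 1)⁻¹).trace) *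
          (1 + (((A - (l + 1) • 1)⁻¹).trace - ((A - l • 1)⁻¹).trace)) ≤
        ((A - (l + 1) • 1)⁻¹ * (A - (l + 1) • 1)⁻¹).trace := by
  have hAh : A.IsHermitian := by
    simpa using hA.1.add (isHermitian_one.smul (IsSelfAdjoint.all l))
  set a := hAh.eigenvalues
  have hl : ∀ i, l < a i := (hAh.posDef_sub_smul_one_iff l).mp hA
  have hφa : ∑ i, (a i - l)⁻¹ < 1 := hAh.trace_inv_sub_smul_one (fun i => (hl i).ne') ▸ hφ
  have hgap : ∀ i, l + 1 < a i := fun i => by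
    have hi : (a i - l)⁻¹ < 1 :=
      (single_le_sum (fun j _ => (inv_pos.mpr (sub_pos.mpr (hl j))).le) (mem_univ i)).trans_lt hφa
    linarith [(inv_lt_one₀ (sub_pos.mpr (hl i))).mp hi]
  refine ⟨(hAh.posDef_sub_smul_one_iff _).mpr hgap, ?_⟩
  simp only [hAh.trace_inv_sub_smul_one fun i => (hgap i).ne',
    hAh.trace_inv_sub_smul_one_mul_self fun i => (hgap i).ne',
    hAh.trace_inv_sub_smul_one fun i => (hl i).ne', ← sub_sub]
  exact sum_inv_sub_one_sub_sum_inv_bounds (x := fun i => a i - l)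
    (fun i => by linarith [hgap i]) hφa.le

theorem exists_lowerBarrier_step [Nonempty m] {v : ι → m → ℝ}
    (hv : ∑ i, vecMulVec (v i) (v i) = 1) {c : ι → ℝ} (hc : ∀ i, 0 ≤ c i)
    {A : Matrix m m ℝ} {l ε : ℝ} (hε : ε < 1) (hA : (A - l • 1).PosDef)
    (hφ : ((A - l • 1)⁻¹).trace ≤ ε) :
    ∃ i, ∃ t > 0, t * c i * (1 - ε) ≤ ∑ j, c j ∧
      (A + t • vecMulVec (v i) (v i) - (l + 1) • 1).PosDef ∧
      ((A + t • vecMulVec (v i) (v i) - (l + 1) • 1)⁻¹).trace ≤ ε := by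
  set N := A - (l + 1) • 1
  set Δ := N⁻¹.trace - ((A - l • 1)⁻¹).trace
  obtain ⟨hN, hΔ, hΔsq⟩ := hA.lowerBarrier_shift (hφ.trans_lt hε)
  have hsumL : 1 - ε ≤ ∑ i, barrierThreshold N Δ (v i) := by
    have : 1 + Δ ≤ (N⁻¹ * N⁻¹).trace / Δ := (le_div_iff₀ hΔ).mpr (by linarith)
    rw [sum_barrierThreshold hv]
    linarith
  set C := ∑ j, c j
  have hC : 0 ≤ C := sum_nonneg fun j _ => hc j
  have h1ε : 0 ≤ 1 - ε := sub_nonneg.mpr hε.le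
  obtain ⟨i, -, hui, hLi⟩ := exists_le_and_pos_of_sum_le (s := univ)
    (u := fun j => (1 - ε) * (c j / C)) (L := fun j => barrierThreshold N Δ (v j))
    (fun j _ => mul_nonneg h1ε (div_nonneg (hc j) hC))
    (by
      rw [← mul_sum, ← sum_div]
      exact (mul_le_of_le_one_right h1ε (div_self_le_one C)).trans hsumL)
    (by linarith)
  obtain ⟨hpos, htr⟩ := hN.add_barrierThreshold_inv_smul hΔ hLi
  set L := barrierThreshold N Δ (v i)
  have hshift : A + L⁻¹ • vecMulVec (v i) (v i) - (l + 1) • 1 =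
      N + L⁻¹ • vecMulVec (v i) (v i) := by
    simp only [N]
    abel
  have hci : (1 - ε) * (c i / C) * C = c i * (1 - ε) := by
    rw [mul_assoc, div_mul_cancel_of_imp fun hC0 =>
      (sum_eq_zero_iff_of_nonneg fun j _ => hc j).mp hC0 i (mem_univ i), mul_comm]
  refine ⟨i, L⁻¹, inv_pos.mpr hLi, ?_, hshift ▸ hpos, ?_⟩
  · calc L⁻¹ * c i * (1 - ε) = L⁻¹ * ((1 - ε) * (c i / C) * C) := by rw [hci, mul_assoc]
      _ ≤ L⁻¹ * (L * C) := by gcongr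
      _ = C := by field_simp
  · rw [hshift, htr]
    linarith

theorem exists_sparse_lowerBarrier [Nonempty m] [DecidableEq ι] {v : ι → m → ℝ}
    (hv : ∑ i, vecMulVec (v i) (v i) = 1) {c : ι → ℝ} (hc : ∀ i, 0 ≤ c i) {ε : ℝ}
    (hε0 : 0 < ε) (hε1 : ε < 1) (τ : ℕ) :
    ∃ w : ι → ℝ, (∀ i, 0 ≤ w i) ∧ {i | w i ≠ 0}.ncard ≤ τ ∧
      (∑ i, w i * c i) * (1 - ε) ≤ τ * ∑ i, c i ∧
      (∑ i, w i • vecMulVec (v i) (v i) - (τ - Fintype.card m / ε) • 1).PosDef ∧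
      ((∑ i, w i • vecMulVec (v i) (v i) - (τ - Fintype.card m / ε) • 1)⁻¹).trace ≤ ε := by
  induction τ with
  | zero =>
    have hk : 0 < (Fintype.card m : ℝ) / ε := div_pos (by exact_mod_cast Fintype.card_pos) hε0
    have hinv : (((Fintype.card m : ℝ) / ε) • (1 : Matrix m m ℝ))⁻¹ =
        ((Fintype.card m : ℝ) / ε)⁻¹ • 1 :=
      inv_eq_left_inv (by rw [smul_mul_smul_comm, inv_mul_cancel₀ hk.ne', one_mul, one_smul])
    refine ⟨0, fun _ => le_rfl, by simp, by simp, ?_⟩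
    simp only [Pi.zero_apply, zero_smul, sum_const_zero, Nat.cast_zero, zero_sub, neg_smul,
      sub_neg_eq_add, zero_add, hinv, trace_smul, trace_one, smul_eq_mul]
    refine ⟨PosDef.one.smul hk, le_of_eq ?_⟩
    field_simp
  | succ τ ih =>
    obtain ⟨w, hw0, hwsupp, hwcost, hwA, hwφ⟩ := ih
    obtain ⟨i, t, ht, hcost, hA, hφ⟩ := exists_lowerBarrier_step hv hc hε1 hwA hwφ
    have hsum : ∑ j, (w + Pi.single i t : ι → ℝ) j • vecMulVec (v j) (v j) =
        ∑ j, w j • vecMulVec (v j) (v j) + t • vecMulVec (v i) (v i) := by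
      simp [add_smul, sum_add_distrib, Pi.single_apply]
    have hl : ((τ + 1 : ℕ) : ℝ) - Fintype.card m / ε = τ - Fintype.card m / ε + 1 := by
      push_cast
      ring
    have hsingle : (0 : ι → ℝ) ≤ Pi.single i t := Pi.single_nonneg.mpr ht.le
    refine ⟨(w + Pi.single i t : ι → ℝ), fun j => add_nonneg (hw0 j) (hsingle j), ?_, ?_, ?_, ?_⟩
    · exact (ncard_support_add_single_le w i t).trans (Nat.add_le_add_right hwsupp 1)
    · simp only [Pi.add_apply, add_mul, sum_add_distrib, Pi.single_apply, ite_mul, zero_mul,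
        sum_ite_eq', mem_univ, if_true]
      push_cast
      nlinarith
    · rw [hsum, hl]
      exact hA
    · rw [hsum, hl]
      exact hφ

theorem exists_sparse_weights [Nonempty m] [DecidableEq ι] {v : ι → m → ℝ}
    (hv : ∑ i, vecMulVec (v i) (v i) = 1) {c : ι → ℝ} (hc : ∀ i, 0 ≤ c i) {r : ℕ}
    (hr : Fintype.card m < r) :
    ∃ s : ι → ℝ, (∀ i, 0 ≤ s i) ∧ {i | s i ≠ 0}.ncard ≤ r ∧
      (∑ i, s i • vecMulVec (v i) (v i) -
        (1 - Real.sqrt (Fintype.card m / r)) ^ 2 • 1).PosSemidef ∧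
      ∑ i, s i * c i ≤ ∑ i, c i := by
  have hr0 : (0 : ℝ) < r := by exact_mod_cast Fintype.card_pos.trans hr
  have hkr : (0 : ℝ) < Fintype.card m / r := div_pos (by exact_mod_cast Fintype.card_pos) hr0
  set ε := Real.sqrt (Fintype.card m / r)
  have hε0 : 0 < ε := Real.sqrt_pos.mpr hkr
  have hε1 : ε < 1 := (Real.sqrt_lt' one_pos).mpr (by
    rw [one_pow, div_lt_one hr0]
    exact_mod_cast hr)
  have hkε : (Fintype.card m : ℝ) / ε = r * ε := by
    rw [div_eq_iff hε0.ne', mul_assoc, ← sq, Real.sq_sqrt hkr.le]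
    field_simp
  obtain ⟨w, hw0, hwsupp, hwcost, hwA, -⟩ := exists_sparse_lowerBarrier hv hc hε0 hε1 r
  set κ := (1 - ε) / r
  have hκ : 0 < κ := div_pos (sub_pos.mpr hε1) hr0
  refine ⟨fun i => κ * w i, fun i => mul_nonneg hκ.le (hw0 i), by simpa [hκ.ne'] using hwsupp,
    ?_, ?_⟩
  · have hscale : ∑ i, (κ * w i) • vecMulVec (v i) (v i) - (1 - ε) ^ 2 • 1 =
        κ • (∑ i, w i • vecMulVec (v i) (v i) - (r - Fintype.card m / ε) • 1) := by
      rw [smul_sub, smul_sum, hkε]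
      simp only [smul_smul]
      congr 2
      simp only [κ]
      field_simp
    rw [hscale]
    exact (hwA.smul hκ).posSemidef
  · calc ∑ i, κ * w i * c i = κ * ∑ i, w i * c i := by simp only [mul_sum, mul_assoc]
      _ ≤ ∑ i, c i := by
        simp only [κ, div_mul_eq_mul_div, div_le_iff₀ hr0]
        linarith

end Barrier

theorem dual_set_spectral_frobenius_sparsification_general
    {n k ℓ : ℕ}
    (v : Fin n → Fin k → ℝ) (a : Fin n → Fin ℓ → ℝ)
    (hv : ∑ i, Matrix.vecMulVec (v i) (v i) = 1)
    (r : ℕ) (hkr : k < r) :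
    ∃ s : Fin n → ℝ,
      (∀ i, 0 ≤ s i) ∧
      {i | s i ≠ 0}.ncard ≤ r ∧
      (∀ hA : (∑ i, s i • Matrix.vecMulVec (v i) (v i)).IsHermitian,
        ∀ j, (1 - Real.sqrt ((k : ℝ) / (r : ℝ))) ^ 2 ≤ hA.eigenvalues j) ∧
      (∑ i, s i • Matrix.vecMulVec (a i) (a i)).trace ≤
        (∑ i, Matrix.vecMulVec (a i) (a i)).trace ∧
      (∑ i, Matrix.vecMulVec (a i) (a i)).trace = ∑ i, ∑ j, a i j ^ 2 := by
  have htrace : ∀ s : Fin n → ℝ,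
      (∑ i, s i • vecMulVec (a i) (a i)).trace = ∑ i, s i * (a i ⬝ᵥ a i) := fun s => by
    simp [trace_sum]
  have hT : (∑ i, vecMulVec (a i) (a i)).trace = ∑ i, a i ⬝ᵥ a i := by simp [trace_sum]
  have hT_sq : ∑ i, a i ⬝ᵥ a i = ∑ i, ∑ j, a i j ^ 2 := by simp [dotProduct, sq]
  have hc : ∀ i, 0 ≤ a i ⬝ᵥ a i := fun i => by simpa using dotProduct_star_self_nonneg (a i)
  rcases Nat.eq_zero_or_pos k with rfl | hk
  · exact ⟨0, fun _ => le_rfl, by simp, fun _ j => j.elim0,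
      by simpa [htrace, hT] using sum_nonneg fun i _ => hc i, hT.trans hT_sq⟩
  have : Nonempty (Fin k) := ⟨⟨0, hk⟩⟩
  obtain ⟨s, hs0, hsupp, hpsd, hcost⟩ :=
    exists_sparse_weights hv hc (r := r) (by rwa [Fintype.card_fin])
  rw [Fintype.card_fin] at hpsd
  exact ⟨s, hs0, hsupp, fun hA => (hA.posSemidef_sub_smul_one_iff _).mp hpsd,
    by rwa [htrace, hT], hT.trans hT_sq⟩

/-- **Dual Set Spectral-Frobenius Sparsification** (Lemma 3.6 of
Boutsidis–Drineas–Magdon-Ismail): given a decomposition of the identity `∑ vᵢvᵢᵀ = I_k`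
(`k < n`), arbitrary vectors `a₁, …, aₙ ∈ ℝ^ℓ`, and `k < r ≤ n`, there are nonnegative
weights `sᵢ`, at most `r` of which are nonzero, with
`λ_min(∑ sᵢvᵢvᵢᵀ) ≥ (1 - √(k/r))²` and `Tr(∑ sᵢaᵢaᵢᵀ) ≤ Tr(∑ aᵢaᵢᵀ) = ∑ ‖aᵢ‖²`. -/
theorem dual_set_spectral_frobenius_sparsification
    {n k ℓ : ℕ} (hkn : k < n)
    (v : Fin n → Fin k → ℝ) (a : Fin n → Fin ℓ → ℝ)
    (hv : ∑ i, Matrix.vecMulVec (v i) (v i) = 1)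
    (r : ℕ) (hkr : k < r) (hrn : r ≤ n) :
    ∃ s : Fin n → ℝ,
      (∀ i, 0 ≤ s i) ∧
      {i | s i ≠ 0}.ncard ≤ r ∧
      (∀ hA : (∑ i, s i • Matrix.vecMulVec (v i) (v i)).IsHermitian,
        ∀ j, (1 - Real.sqrt ((k : ℝ) / (r : ℝ))) ^ 2 ≤ hA.eigenvalues j) ∧
      (∑ i, s i • Matrix.vecMulVec (a i) (a i)).trace ≤
        (∑ i, Matrix.vecMulVec (a i) (a i)).trace ∧
      (∑ i, Matrix.vecMulVec (a i) (a i)).trace = ∑ i, ∑ j, a i j ^ 2 :=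
  dual_set_spectral_frobenius_sparsification_general v a hv r hkr
end

section
/- Let B ∈ R^{ℓ×ℓ} be symmetric positive semidefinite with eigenvalues λ_1,…,λ_ℓ, let u ∈ R satisfy u > λ_i for all i, and let δ > 0. Define φ̄(x) = Σ_{i=1}^ℓ 1/(x − λ_i) for x > λ_1. Then φ̄(u) − φ̄(u+δ) > 0 and Tr(((u+δ)I_ℓ − B)⁻²) / (φ̄(u) − φ̄(u+δ)) + φ̄(u+δ) ≤ 1/δ + φ̄(u). -/
open Matrix MeasureTheory

/-! Diagonalising `B` turns the trace into `∑ᵢ (u + δ - λᵢ)⁻²`, and termwise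
`(u + δ - λ)⁻² ≤ (u - λ)⁻¹ (u + δ - λ)⁻¹ = ((u - λ)⁻¹ - (u + δ - λ)⁻¹) / δ`;
summing gives `Tr(…) ≤ (φ̄(u) - φ̄(u + δ)) / δ`, and `φ̄(u + δ) < φ̄(u)` does the rest. -/

namespace Matrix.IsHermitian

variable {𝕜 n : Type*} [RCLike 𝕜] [Fintype n] [DecidableEq n] {A : Matrix n n 𝕜}

theorem trace_cfc (hA : A.IsHermitian) (f : ℝ → ℝ) :
    (cfc f A).trace = ∑ i, (f (hA.eigenvalues i) : 𝕜) := by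
  have hU : star (hA.eigenvectorUnitary : Matrix n n 𝕜) * hA.eigenvectorUnitary = 1 :=
    Unitary.star_mul_self_of_mem hA.eigenvectorUnitary.2
  rw [hA.cfc_eq, IsHermitian.cfc, Unitary.conjStarAlgAut_apply, trace_mul_cycle, hU, one_mul,
    trace_diagonal]
  rfl

theorem inv_smul_one_sub_eq_cfc (hA : A.IsHermitian) {c : ℝ} (hc : ∀ i, hA.eigenvalues i ≠ c) :
    (c • (1 : Matrix n n 𝕜) - A)⁻¹ = cfc (fun x => (c - x)⁻¹) A := by
  have hA' : IsSelfAdjoint A := hA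
  have hsub : c • (1 : Matrix n n 𝕜) - A = cfc (fun x => c - x) A := by
    rw [cfc_sub (fun _ => c) (fun x => x) A, cfc_const c A, cfc_id' ℝ A,
      Algebra.algebraMap_eq_smul_one]
  refine inv_eq_right_inv ?_
  rw [hsub, ← cfc_mul _ _ _ (by fun_prop) (A.finite_real_spectrum.continuousOn _),
    ← cfc_one ℝ A]
  refine cfc_congr fun x hx => ?_
  obtain ⟨i, rfl⟩ := hA.spectrum_real_eq_range_eigenvalues ▸ hx
  exact mul_inv_cancel₀ (sub_ne_zero.mpr (hc i).symm)

theorem trace_inv_smul_one_sub_sq (hA : A.IsHermitian) {c : ℝ} (hc : ∀ i, hA.eigenvalues i ≠ c) :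
    ((c • (1 : Matrix n n 𝕜) - A)⁻¹ ^ 2).trace =
      ∑ i, (((c - hA.eigenvalues i)⁻¹ ^ 2 : ℝ) : 𝕜) := by
  rw [hA.inv_smul_one_sub_eq_cfc hc, ← cfc_pow _ _ _ (A.finite_real_spectrum.continuousOn _),
    hA.trace_cfc]

end Matrix.IsHermitian

theorem sq_inv_add_sub_le_inv_sub_sub_inv_div {a u δ : ℝ} (ha : a < u) (hδ : 0 < δ) :
    (u + δ - a)⁻¹ ^ 2 ≤ ((u - a)⁻¹ - (u + δ - a)⁻¹) / δ := by
  have hx : 0 < u - a := sub_pos.mpr ha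
  have hy : 0 < u + δ - a := by linarith
  calc (u + δ - a)⁻¹ ^ 2 = ((u + δ - a) * (u + δ - a))⁻¹ := by rw [sq, mul_inv]
    _ ≤ ((u - a) * (u + δ - a))⁻¹ := inv_anti₀ (mul_pos hx hy) (by gcongr; linarith)
    _ = ((u - a)⁻¹ - (u + δ - a)⁻¹) / δ := by
      rw [inv_sub_inv hx.ne' hy.ne', show u + δ - a - (u - a) = δ by ring]
      field_simp

section BarrierPotential

variable {ι : Type*} [Fintype ι] [Nonempty ι] {a : ι → ℝ} {u δ : ℝ}

theorem sum_inv_add_sub_lt_sum_inv_sub (ha : ∀ i, a i < u) (hδ : 0 < δ) :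
    ∑ i, (u + δ - a i)⁻¹ < ∑ i, (u - a i)⁻¹ :=
  Finset.sum_lt_sum_of_nonempty Finset.univ_nonempty fun i _ =>
    inv_strictAnti₀ (sub_pos.mpr (ha i)) (by linarith)

theorem sum_sq_inv_div_add_le (ha : ∀ i, a i < u) (hδ : 0 < δ) :
    (∑ i, (u + δ - a i)⁻¹ ^ 2) / (∑ i, (u - a i)⁻¹ - ∑ i, (u + δ - a i)⁻¹) +
        ∑ i, (u + δ - a i)⁻¹ ≤ 1 / δ + ∑ i, (u - a i)⁻¹ := by
  have hgap := sub_pos.mpr (sum_inv_add_sub_lt_sum_inv_sub ha hδ)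
  have hsq : ∑ i, (u + δ - a i)⁻¹ ^ 2 ≤ (∑ i, (u - a i)⁻¹ - ∑ i, (u + δ - a i)⁻¹) / δ := by
    rw [← Finset.sum_sub_distrib, Finset.sum_div]
    exact Finset.sum_le_sum fun i _ => sq_inv_add_sub_le_inv_sub_sub_inv_div (ha i) hδ
  have hdiv : (∑ i, (u + δ - a i)⁻¹ ^ 2) / (∑ i, (u - a i)⁻¹ - ∑ i, (u + δ - a i)⁻¹) ≤ 1 / δ := by
    rw [div_le_iff₀ hgap]
    exact hsq.trans_eq (by ring)
  linarith

end BarrierPotential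

/-- **Upper-barrier potential inequality** (part of Lemma 7.6 of
Boutsidis–Drineas–Magdon-Ismail, after Batson–Spielman–Srivastava): for a symmetric
positive semidefinite `B` with eigenvalues `λ₁, …, λ_ℓ`, `u > λᵢ` for all `i`, and
`δ > 0`, setting `φ̄(x) = ∑ᵢ 1/(x - λᵢ)`, one has `φ̄(u) - φ̄(u+δ) > 0` and
`Tr(((u+δ)I - B)⁻²) / (φ̄(u) - φ̄(u+δ)) + φ̄(u+δ) ≤ 1/δ + φ̄(u)`. -/
theorem upper_barrier_potential
    {ℓ : ℕ} (hℓ : 0 < ℓ) (B : Matrix (Fin ℓ) (Fin ℓ) ℝ) (hB : B.PosSemidef)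
    (u δ : ℝ) (hδ : 0 < δ) (hu : ∀ i, hB.1.eigenvalues i < u) :
    0 < (∑ i, (u - hB.1.eigenvalues i)⁻¹) - (∑ i, (u + δ - hB.1.eigenvalues i)⁻¹) ∧
    ((((u + δ) • (1 : Matrix (Fin ℓ) (Fin ℓ) ℝ) - B)⁻¹ ^ 2).trace) /
        ((∑ i, (u - hB.1.eigenvalues i)⁻¹) - (∑ i, (u + δ - hB.1.eigenvalues i)⁻¹)) +
        (∑ i, (u + δ - hB.1.eigenvalues i)⁻¹) ≤
      1 / δ + (∑ i, (u - hB.1.eigenvalues i)⁻¹) := by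
  have : Nonempty (Fin ℓ) := Fin.pos_iff_nonempty.mp hℓ
  have hne : ∀ i, hB.1.eigenvalues i ≠ u + δ := fun i => by linarith [hu i]
  refine ⟨sub_pos.mpr (sum_inv_add_sub_lt_sum_inv_sub hu hδ), ?_⟩
  rw [hB.1.trace_inv_smul_one_sub_sq hne]
  exact sum_sq_inv_div_add_le hu hδ
end
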